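/- Let d ≥ 2 and m ≥ 1, L = dm, and let g : {0,…,L−m} → ℤ satisfy |g(i+1) − g(i)| ≤ 1 for all i, and suppose g(0) + g(m) + g(2m) + … + g((d−1)m) = 0. Then g(i) = 0 for some i. -/
import Mathlib

/-- Discrete intermediate value theorem for slowly varying integer sequences. -/
lemma ivt_aux (g : ℕ → ℤ) : ∀ n a, g a ≤ 0 → 0 ≤ g (a + n) →
    (∀ i, a ≤ i → i + 1 ≤ a + n → |g (i + 1) - g i| ≤ 1) →
    ∃ i, a ≤ i ∧ i ≤ a + n ∧ g i = 0 := by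
  intro n
  induction n with
  | zero => exact fun a h0 h1 _ => ⟨a, le_refl _, le_refl _, le_antisymm h0 h1⟩
  | succ n ih =>
    intro a h0 h1 hstep
    by_cases h : g a = 0
    · exact ⟨a, le_refl _, by omega, h⟩
    · have hs := abs_le.mp (hstep a (le_refl _) (by omega))
      have h0' : g (a + 1) ≤ 0 := by omega
      obtain ⟨i, hi1, hi2, hi3⟩ := ih (a + 1) h0'
        (by rwa [show a + 1 + n = a + (n + 1) by omega])
        (fun i hia hib => hstep i (by omega) (by omega))
      exact ⟨i, by omega, by omega, hi3⟩

/-- If `g : {0,…,(d−1)m} → ℤ` has consecutive values differing by at most `1` and its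
values at the `d` multiples of `m` sum to zero, then `g` vanishes somewhere. -/
theorem exists_zero_of_slowly_varying (d m : ℕ) (hd : 2 ≤ d) (hm : 1 ≤ m)
    (g : ℕ → ℤ) (hstep : ∀ i, i + 1 ≤ (d - 1) * m → |g (i + 1) - g i| ≤ 1)
    (hsum : ∑ j ∈ Finset.range d, g (j * m) = 0) :
    ∃ i ≤ (d - 1) * m, g i = 0 := by
  have hne : (Finset.range d).Nonempty := ⟨0, Finset.mem_range.mpr (by omega)⟩
  -- some value ≤ 0 and some value ≥ 0 among the g (j*m)
  have hneg : ∃ j < d, g (j * m) ≤ 0 := by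
    by_contra h
    push_neg at h
    have : 0 < ∑ j ∈ Finset.range d, g (j * m) :=
      Finset.sum_pos (fun j hj => h j (Finset.mem_range.mp hj)) hne
    omega
  have hpos : ∃ k < d, 0 ≤ g (k * m) := by
    by_contra h
    push_neg at h
    have : ∑ j ∈ Finset.range d, g (j * m) < 0 :=
      Finset.sum_neg (fun j hj => h j (Finset.mem_range.mp hj)) hne
    omega
  obtain ⟨j, hj, hgj⟩ := hneg
  obtain ⟨k, hk, hgk⟩ := hpos
  have hjb : j * m ≤ (d - 1) * m := Nat.mul_le_mul_right m (by omega)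
  have hkb : k * m ≤ (d - 1) * m := Nat.mul_le_mul_right m (by omega)
  rcases le_total j k with hjk | hjk
  · have hle : j * m ≤ k * m := Nat.mul_le_mul_right m hjk
    obtain ⟨i, hi1, hi2, hi3⟩ := ivt_aux g (k * m - j * m) (j * m) hgj
      (by rwa [show j * m + (k * m - j * m) = k * m by omega])
      (fun i hia hib => hstep i (by omega))
    exact ⟨i, by omega, hi3⟩
  · have hle : k * m ≤ j * m := Nat.mul_le_mul_right m hjk
    obtain ⟨i, hi1, hi2, hi3⟩ := ivt_aux (fun n => -g n) (j * m - k * m) (k * m)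
      (by simpa using hgk)
      (by rw [show k * m + (j * m - k * m) = j * m by omega]; simpa using hgj)
      (fun i hia hib => by
        have h := hstep i (by omega)
        show |-g (i + 1) - -g i| ≤ 1
        rwa [show -g (i + 1) - -g i = -(g (i + 1) - g i) from by ring, abs_neg])
    exact ⟨i, by omega, by simpa using hi3⟩
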